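/- Let p be a real polynomial of degree k ≥ 2 and x ∈ ℝ with p'(x) ≠ 0. Then the secant map G(x,y) = (y, (y·q(x,y) − p(y))/q(x,y)) is differentiable at the diagonal point (x,x) and its total derivative there is the linear map with matrix [[0, 1], [c, c]], where c = p(x)·p''(x)/(2·p'(x)²). (Moreover G(x,x) = (x, N_p(x)), where N_p(x) = x − p(x)/p'(x) is the Newton map of p.) -/

import Mathlib

open Polynomial Filter Topology

/-- The symmetric polynomial `q(x,y)` associated to `p`, satisfying
`p(x) - p(y) = (x - y) * secQ p x y`. -/
noncomputable def secQ (p : Polynomial ℝ) (x y : ℝ) : ℝ :=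
  ∑ j ∈ Finset.range (p.natDegree + 1),
    p.coeff j * ∑ i ∈ Finset.range j, x ^ i * y ^ (j - 1 - i)

/-- The secant map in extended form: `G(x,y) = (y, (y·q(x,y) − p(y))/q(x,y))`. -/
noncomputable def secG (p : Polynomial ℝ) (z : ℝ × ℝ) : ℝ × ℝ :=
  (z.2, (z.2 * secQ p z.1 z.2 - Polynomial.eval z.2 p) / secQ p z.1 z.2)

/-!
For the monomial `X ^ n`, `q` is the homogeneous geometric sum `∑ xⁱ yⁿ⁻¹⁻ⁱ`; the recursion
`gₙ₊₁(x, y) = xⁿ + y gₙ(x, y)` shows that its derivative on the diagonal is `(n choose 2) xⁿ⁻²`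
in both directions. Since `q` is linear in `p`, this gives `D q(x, x) = p''(x)/2 · (dx + dy)`, and
`q(x, x) = p'(x)`. The quotient rule applied to `(y q − p(y)) / q` at `(x, x)` then yields
`(p' · x Dq − (x p' − p) Dq) / p'² = (p / p'²) Dq`.
-/

open Finset ContinuousLinearMap

theorem HasFDerivAt.div {𝕜 E : Type*} [NontriviallyNormedField 𝕜] [NormedAddCommGroup E]
    [NormedSpace 𝕜 E] {f g : E → 𝕜} {f' g' : E →L[𝕜] 𝕜} {z : E}
    (hf : HasFDerivAt f f' z) (hg : HasFDerivAt g g' z) (hz : g z ≠ 0) :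
    HasFDerivAt (fun w => f w / g w) ((g z ^ 2)⁻¹ • (g z • f' - f z • g')) z := by
  simp only [div_eq_mul_inv]
  refine (hf.fun_mul ((hasDerivAt_inv hz).comp_hasFDerivAt z hg)).congr_fderiv ?_
  ext w
  simp only [smul_apply, add_apply, sub_apply, Function.comp_apply, smul_eq_mul]
  field_simp
  ring

theorem secQ_eq_sum (p : ℝ[X]) (x y : ℝ) :
    secQ p x y = p.sum fun j a => a * ∑ i ∈ range j, x ^ i * y ^ (j - 1 - i) :=
  (p.sum_over_range (f := fun j a => a * ∑ i ∈ range j, x ^ i * y ^ (j - 1 - i))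
    fun _ => zero_mul _).symm

theorem secQ_add (p r : ℝ[X]) (x y : ℝ) : secQ (p + r) x y = secQ p x y + secQ r x y := by
  simp only [secQ_eq_sum]
  exact sum_add_index _ _ _ (fun _ => zero_mul _) fun _ _ _ => add_mul _ _ _

theorem secQ_monomial (n : ℕ) (a x y : ℝ) :
    secQ (monomial n a) x y = a * ∑ i ∈ range n, x ^ i * y ^ (n - 1 - i) := by
  rw [secQ_eq_sum, sum_monomial_index a (fun j a => a * ∑ i ∈ range j, x ^ i * y ^ (j - 1 - i))
    (zero_mul _)]

theorem secQ_self (p : ℝ[X]) (x : ℝ) : secQ p x x = p.derivative.eval x := by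
  simp only [secQ_eq_sum, derivative_eval, geom_sum₂_self, mul_assoc]

theorem hasFDerivAt_geom_sum₂_diag {𝕜 : Type*} [NontriviallyNormedField 𝕜] (n : ℕ) (x : 𝕜) :
    HasFDerivAt (fun z : 𝕜 × 𝕜 => ∑ i ∈ range n, z.1 ^ i * z.2 ^ (n - 1 - i))
      (((n.choose 2 : 𝕜) * x ^ (n - 2)) • (fst 𝕜 𝕜 𝕜 + snd 𝕜 𝕜 𝕜 : 𝕜 × 𝕜 →L[𝕜] 𝕜)) (x, x) := by
  induction n with
  | zero =>
    refine (hasFDerivAt_const (0 : 𝕜) (x, x)).congr_of_eventuallyEq ?_ |>.congr_fderiv ?_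
    · simp
    · ext <;> simp
  | succ n ih =>
    have hcoeff : ((n + 1).choose 2 : 𝕜) * x ^ (n - 1) =
        n * x ^ (n - 1) + x * (n.choose 2 * x ^ (n - 2)) := by
      rcases n with _ | _ | n <;> simp [Nat.choose_succ_succ', pow_succ]; ring
    simp only [Nat.add_sub_cancel, geom_sum₂_succ_eq]
    refine ((hasFDerivAt_fst.pow n).add (hasFDerivAt_snd.mul ih)).congr_fderiv ?_
    ext <;> simp [geom_sum₂_self, hcoeff]; ring

theorem hasFDerivAt_secQ_diag (p : ℝ[X]) (x : ℝ) :
    HasFDerivAt (fun z : ℝ × ℝ => secQ p z.1 z.2)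
      ((p.derivative.derivative.eval x / 2) • (fst ℝ ℝ ℝ + snd ℝ ℝ ℝ : ℝ × ℝ →L[ℝ] ℝ)) (x, x) := by
  induction p using Polynomial.induction_on' with
  | add p r hp hr =>
    simp only [secQ_add, derivative_add, eval_add, add_div, add_smul]
    exact hp.add hr
  | monomial n a =>
    simp only [secQ_monomial]
    refine ((hasFDerivAt_geom_sum₂_diag n x).const_mul a).congr_fderiv ?_
    rw [smul_smul]
    congr 1
    rcases n with _ | n
    · simp
    · simp [derivative_monomial, Nat.cast_choose_two]
      ring

theorem secant_fderiv_diagonal_general (p : Polynomial ℝ) (x : ℝ)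
    (hx : p.derivative.eval x ≠ 0) :
    HasFDerivAt (secG p)
      ((ContinuousLinearMap.snd ℝ ℝ ℝ).prod
        ((p.eval x * p.derivative.derivative.eval x / (2 * (p.derivative.eval x) ^ 2)) •
            ContinuousLinearMap.fst ℝ ℝ ℝ +
          (p.eval x * p.derivative.derivative.eval x / (2 * (p.derivative.eval x) ^ 2)) •
            ContinuousLinearMap.snd ℝ ℝ ℝ))
      (x, x) ∧
    secG p (x, x) = (x, x - p.eval x / p.derivative.eval x) := by
  have hq := hasFDerivAt_secQ_diag p x
  have hq_self := secQ_self p x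
  have hnum : HasFDerivAt (fun z : ℝ × ℝ => z.2 * secQ p z.1 z.2 - p.eval z.2)
      (x • (p.derivative.derivative.eval x / 2) • (fst ℝ ℝ ℝ + snd ℝ ℝ ℝ : ℝ × ℝ →L[ℝ] ℝ))
      (x, x) := by
    refine (hasFDerivAt_snd.mul hq |>.sub ((p.hasDerivAt x).comp_hasFDerivAt _ hasFDerivAt_snd))
      |>.congr_fderiv ?_
    simp [hq_self]
  refine ⟨hasFDerivAt_snd.prodMk ((hnum.div hq (hq_self ▸ hx)).congr_fderiv ?_), ?_⟩
  · ext <;> simp [hq_self] <;> field_simp <;> ring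
  · simp only [secG, hq_self]
    congr 1
    field_simp

theorem secant_fderiv_diagonal (p : Polynomial ℝ) (hp : 2 ≤ p.natDegree) (x : ℝ)
    (hx : p.derivative.eval x ≠ 0) :
    HasFDerivAt (secG p)
      ((ContinuousLinearMap.snd ℝ ℝ ℝ).prod
        ((p.eval x * p.derivative.derivative.eval x / (2 * (p.derivative.eval x) ^ 2)) •
            ContinuousLinearMap.fst ℝ ℝ ℝ +
          (p.eval x * p.derivative.derivative.eval x / (2 * (p.derivative.eval x) ^ 2)) •
            ContinuousLinearMap.snd ℝ ℝ ℝ))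
      (x, x) ∧
    secG p (x, x) = (x, x - p.eval x / p.derivative.eval x) :=
  secant_fderiv_diagonal_general p x hx
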